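/- Let F be a pseudofunctor between bicategories that is locally smothering, i.e. for every pair of objects x, y of the source the induced functor on hom-categories Hom(x,y) → Hom(F x, F y) is surjective on objects, full, and conservative. Given objects a and b of the source bicategory, 1-cells f' : F b ⟶ F a and u' : F a ⟶ F b, and an adjunction f' ⊣ u' in the target bicategory, there exist 1-cells f : b ⟶ a and u : a ⟶ b with F f = f' and F u = u' together with an adjunction f ⊣ u in the source bicategory. -/

import Mathlib

open CategoryTheory Simplicial Opposite MonoidalCategory CartesianMonoidalCategory

universe v₁ v₂ v₃ u₁ u₂ u₃

noncomputable section
namespace QCat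

/-! ## The internal hom of simplicial sets -/

/-- The internal hom of simplicial sets: an `n`-simplex of `sHom X A` is a map
`X ⊗ Δ[n] ⟶ A`. -/
def sHom (X A : SSet.{0}) : SSet.{0} where
  obj m := (X ⊗ SSet.stdSimplex.obj m.unop) ⟶ A
  map φ := ↾fun g => (X ◁ SSet.stdSimplex.map φ.unop) ≫ g
  map_id m := by refine ConcreteCategory.hom_ext _ _ fun g => ?_; erw [CategoryTheory.Functor.map_id]; simp
  map_comp φ ψ := by refine ConcreteCategory.hom_ext _ _ fun g => ?_; erw [CategoryTheory.Functor.map_comp]; simp [MonoidalCategory.whiskerLeft_comp]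

/-- constant map of simplicial sets to a standard simplex, at vertex `k` -/
def cnst (Y : SSet.{0}) {n : ℕ} (k : Fin (n+1)) : Y ⟶ Δ[n] where
  app m := ↾fun _ => SSet.stdSimplex.const n k m
  naturality _ _ _ := by
    ext y
    apply (SSet.stdSimplex.objEquiv).injective
    apply SimplexCategory.Hom.ext
    ext x
    rfl

@[simp] lemma comp_cnst {X Y : SSet.{0}} (h : X ⟶ Y) {n : ℕ} (k : Fin (n+1)) :
    h ≫ cnst Y k = cnst X k := rfl

/-- inclusion of `Y` into the cylinder `Y ⊗ Δ[1]` at vertex `i`. -/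
def pt (i : Fin 2) (Y : SSet.{0}) : Y ⟶ Y ⊗ Δ[1] :=
  CartesianMonoidalCategory.lift (𝟙 Y) (cnst Y i)

lemma pt_natural (i : Fin 2) {X Y : SSet.{0}} (h : X ⟶ Y) :
    h ≫ pt i Y = pt i X ≫ (h ▷ Δ[1]) := by
  apply CartesianMonoidalCategory.hom_ext <;> simp [pt]

/-! ## The homotopy category of a simplicial set -/

lemma δ₁σ₀ (X : SSet.{0}) (x : X _⦋0⦌) : X.δ 1 (X.σ 0 x) = x := by
  change (X.σ 0 ≫ X.δ 1) x = x
  rw [SimplicialObject.δ_comp_σ_succ' (X := X) (j := 1) (i := 0) (by decide)]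
  rfl

lemma δ₀σ₀ (X : SSet.{0}) (x : X _⦋0⦌) : X.δ 0 (X.σ 0 x) = x := by
  change (X.σ 0 ≫ X.δ 0) x = x
  rw [SimplicialObject.δ_comp_σ_self' (X := X) (j := 0) (i := 0) (by decide)]
  rfl

lemma app_δ {X Y : SSet.{0}} (u : X ⟶ Y) {n : ℕ} (i : Fin (n+2)) (e : X _⦋n+1⦌) :
    u.app (op ⦋n⦌) (X.δ i e) = Y.δ i (u.app (op ⦋n+1⦌) e) :=
  ConcreteCategory.congr_hom (SimplicialObject.δ_naturality u i) e

lemma app_σ {X Y : SSet.{0}} (u : X ⟶ Y) {n : ℕ} (i : Fin (n+1)) (e : X _⦋n⦌) :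
    u.app (op ⦋n+1⦌) (X.σ i e) = Y.σ i (u.app (op ⦋n⦌) e) :=
  ConcreteCategory.congr_hom (SimplicialObject.σ_naturality u i) e

instance hoQuiver (X : SSet.{0}) : Quiver (X _⦋0⦌) :=
  ⟨fun x y => {e : X _⦋1⦌ // X.δ 1 e = x ∧ X.δ 0 e = y}⟩

/-- The degenerate edge at a vertex, as an arrow of the edge quiver. -/
def degEdge {X : SSet.{0}} (x : X _⦋0⦌) : x ⟶ x :=
  ⟨X.σ 0 x, δ₁σ₀ X x, δ₀σ₀ X x⟩

/-- The relation on the free category on the graph of vertices and edges of a simplicial set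
which is generated by the degenerate edges (which are related to identities) and the
2-simplices (which witness composition relations). -/
inductive HoRel (X : SSet.{0}) :
    ∀ (a b : Paths (X _⦋0⦌)), (a ⟶ b) → (a ⟶ b) → Prop
| id (x : X _⦋0⦌) :
      HoRel X ((Paths.of _).obj x) ((Paths.of _).obj x)
        (Quiver.Hom.toPath (degEdge x)) (𝟙 ((Paths.of _).obj x))
| comp (σ : X _⦋2⦌) (a m b : X _⦋0⦌)
      (h2s : X.δ 1 (X.δ 2 σ) = a) (h2t : X.δ 0 (X.δ 2 σ) = m)
      (h0s : X.δ 1 (X.δ 0 σ) = m) (h0t : X.δ 0 (X.δ 0 σ) = b)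
      (h1s : X.δ 1 (X.δ 1 σ) = a) (h1t : X.δ 0 (X.δ 1 σ) = b) :
      HoRel X ((Paths.of _).obj a) ((Paths.of _).obj b)
        (Quiver.Hom.toPath (⟨X.δ 2 σ, h2s, h2t⟩ : a ⟶ m) ≫
          Quiver.Hom.toPath (⟨X.δ 0 σ, h0s, h0t⟩ : m ⟶ b))
        (Quiver.Hom.toPath ⟨X.δ 1 σ, h1s, h1t⟩)

/-- The homotopy category of a simplicial set: the free category on its vertices and
edges, quotiented by the relations generated by degenerate edges and 2-simplices.
This realises the value at `X` of the left adjoint `h` of the nerve functor. -/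
instance hoRelQuotientCategory (X : SSet.{0}) : Category.{0} (CategoryTheory.Quotient (HoRel X)) :=
  CategoryTheory.Quotient.category (HoRel X)

def Ho (X : SSet.{0}) : Type := CategoryTheory.Quotient (HoRel X)

instance (X : SSet.{0}) : Category.{0} (Ho X) :=
  inferInstanceAs (Category (CategoryTheory.Quotient (HoRel X)))

/-- The object of `Ho X` corresponding to a vertex of `X`. -/
def toHo {X : SSet.{0}} (x : X _⦋0⦌) : Ho X := ⟨(Paths.of _).obj x⟩

/-- The morphism of `Ho X` represented by an edge of `X`, with specified endpoints. -/
def homOfEdge {X : SSet.{0}} (e : X _⦋1⦌) (x y : X _⦋0⦌)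
    (hx : X.δ 1 e = x) (hy : X.δ 0 e = y) : toHo x ⟶ toHo y :=
  (Quotient.functor (HoRel X)).map (Quiver.Hom.toPath ⟨e, hx, hy⟩)

lemma homOfEdge_comp {X : SSet.{0}} (σ : X _⦋2⦌) (a m b : X _⦋0⦌)
    (h2s : X.δ 1 (X.δ 2 σ) = a) (h2t : X.δ 0 (X.δ 2 σ) = m)
    (h0s : X.δ 1 (X.δ 0 σ) = m) (h0t : X.δ 0 (X.δ 0 σ) = b)
    (h1s : X.δ 1 (X.δ 1 σ) = a) (h1t : X.δ 0 (X.δ 1 σ) = b) :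
    homOfEdge (X.δ 2 σ) a m h2s h2t ≫ homOfEdge (X.δ 0 σ) m b h0s h0t =
      homOfEdge (X.δ 1 σ) a b h1s h1t := by
  erw [homOfEdge, homOfEdge, homOfEdge, ← Functor.map_comp]
  exact CategoryTheory.Quotient.sound _ (HoRel.comp σ a m b h2s h2t h0s h0t h1s h1t)

lemma homOfEdge_deg {X : SSet.{0}} (x : X _⦋0⦌) :
    homOfEdge (X.σ 0 x) x x (δ₁σ₀ X x) (δ₀σ₀ X x) = 𝟙 (toHo x) := by
  have h := CategoryTheory.Quotient.sound (HoRel X) (HoRel.id x)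
  rw [homOfEdge]
  exact h.trans (CategoryTheory.Functor.map_id _ _)

/-- An edge of a simplicial set is an *isomorphism* if it becomes invertible
in the homotopy category. -/
def IsIsoEdge (X : SSet.{0}) (e : X _⦋1⦌) : Prop :=
  IsIso (homOfEdge e (X.δ 1 e) (X.δ 0 e) rfl rfl)

end QCat

namespace QCat
open CategoryTheory Simplicial Opposite MonoidalCategory CartesianMonoidalCategory

/-! ## Functoriality of the homotopy category -/

/-- The prefunctor on vertices and edges induced by a simplicial map. -/
def edgePre {X Y : SSet.{0}} (u : X ⟶ Y) : Prefunctor (X _⦋0⦌) (Y _⦋0⦌) where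
  obj x := u.app (op ⦋0⦌) x
  map {x y} e := ⟨u.app (op ⦋1⦌) e.1, by rw [← app_δ, e.2.1], by rw [← app_δ, e.2.2]⟩

/-- The functor on homotopy categories induced by a simplicial map. -/
def hoMap {X Y : SSet.{0}} (u : X ⟶ Y) : Ho X ⥤ Ho Y := by
  refine CategoryTheory.Quotient.lift (HoRel X)
    (Paths.lift ((edgePre u).comp
      (Prefunctor.comp (Paths.of _) (Quotient.functor (HoRel Y)).toPrefunctor))) ?_
  intro a b p q h
  induction h with
  | id x =>
    erw [Paths.lift_toPath, CategoryTheory.Functor.map_id]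
    have : (edgePre u).map (degEdge x) = degEdge (u.app (op ⦋0⦌) x) :=
      Subtype.ext (app_σ u 0 x)
    dsimp [Prefunctor.comp]
    erw [this]
    have h := CategoryTheory.Quotient.sound (HoRel Y) (HoRel.id (u.app (op ⦋0⦌) x))
    exact h.trans (CategoryTheory.Functor.map_id _ _)
  | comp σ a m b h2s h2t h0s h0t h1s h1t =>
    erw [Paths.lift_toPath, Functor.map_comp, Paths.lift_toPath, Paths.lift_toPath]
    dsimp [Prefunctor.comp]
    have e2 : (edgePre u).map (⟨X.δ 2 σ, h2s, h2t⟩ : a ⟶ m) =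
        ⟨Y.δ 2 (u.app (op ⦋2⦌) σ), by rw [← app_δ, ← app_δ, h2s]; rfl, by rw [← app_δ, ← app_δ, h2t]; rfl⟩ :=
      Subtype.ext (app_δ u 2 σ)
    have e0 : (edgePre u).map (⟨X.δ 0 σ, h0s, h0t⟩ : m ⟶ b) =
        ⟨Y.δ 0 (u.app (op ⦋2⦌) σ), by rw [← app_δ, ← app_δ, h0s]; rfl, by rw [← app_δ, ← app_δ, h0t]; rfl⟩ :=
      Subtype.ext (app_δ u 0 σ)
    have e1 : (edgePre u).map (⟨X.δ 1 σ, h1s, h1t⟩ : a ⟶ b) =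
        ⟨Y.δ 1 (u.app (op ⦋2⦌) σ), by rw [← app_δ, ← app_δ, h1s]; rfl, by rw [← app_δ, ← app_δ, h1t]; rfl⟩ :=
      Subtype.ext (app_δ u 1 σ)
    erw [e2, e0, e1]
    refine ((Quotient.functor (HoRel Y)).map_comp _ _).symm.trans ?_
    exact CategoryTheory.Quotient.sound _
      (HoRel.comp (u.app (op ⦋2⦌) σ) (u.app (op ⦋0⦌) a) (u.app (op ⦋0⦌) m) (u.app (op ⦋0⦌) b)
        (by rw [← app_δ, ← app_δ, h2s]) (by rw [← app_δ, ← app_δ, h2t])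
        (by rw [← app_δ, ← app_δ, h0s]) (by rw [← app_δ, ← app_δ, h0t])
        (by rw [← app_δ, ← app_δ, h1s]) (by rw [← app_δ, ← app_δ, h1t]))

@[simp] lemma hoMap_obj_toHo {X Y : SSet.{0}} (u : X ⟶ Y) (x : X _⦋0⦌) :
    (hoMap u).obj (toHo x) = toHo (u.app (op ⦋0⦌) x) := rfl

lemma hoMap_homOfEdge {X Y : SSet.{0}} (u : X ⟶ Y) (e : X _⦋1⦌) (x y : X _⦋0⦌)
    (hx : X.δ 1 e = x) (hy : X.δ 0 e = y) :
    (hoMap u).map (homOfEdge e x y hx hy) =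
      homOfEdge (u.app (op ⦋1⦌) e) (u.app (op ⦋0⦌) x) (u.app (op ⦋0⦌) y)
        (by rw [← hx, app_δ]) (by rw [← hy, app_δ]) := by
  dsimp only [hoMap, homOfEdge]
  erw [CategoryTheory.Quotient.lift_map_functor_map, Paths.lift_toPath]

end QCat

namespace QCat
open CategoryTheory Simplicial Opposite MonoidalCategory CartesianMonoidalCategory

/-! ## Smothering functors -/

/-- A functor is *smothering* if it is surjective on objects, full, and conservative. -/
structure IsSmothering {C D : Type*} [Category C] [Category D] (F : C ⥤ D) : Prop where
  obj_surj : ∀ d : D, ∃ c : C, F.obj c = d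
  full : ∀ {c c' : C} (g : F.obj c ⟶ F.obj c'), ∃ f : c ⟶ c', F.map f = g
  conservative : ∀ {c c' : C} (f : c ⟶ c'), IsIso (F.map f) → IsIso f

/-! ## Fibrations of simplicial sets -/

/-- A map of simplicial sets is an inner fibration if it has the right lifting property
with respect to all inner horn inclusions. -/
def IsInnerFibration {E B : SSet.{0}} (p : E ⟶ B) : Prop :=
  ∀ ⦃n : ℕ⦄ ⦃i : Fin (n+1)⦄, 0 < i → i < Fin.last n →
    HasLiftingProperty (Λ[n, i].ι) p

/-- The free-standing isomorphism: the groupoid with two objects and exactly one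
morphism in each hom-set. -/
def WIso : Type := Bool

instance : Groupoid WIso where
  Hom _ _ := PUnit
  id _ := PUnit.unit
  comp _ _ := PUnit.unit
  inv _ := PUnit.unit

/-- One of the two endpoint inclusions `Δ[0] ⟶ N(I)` into the nerve of the free-standing
isomorphism. -/
def ptWIso : Δ[0] ⟶ nerve WIso :=
  (SSet.yonedaEquiv (X := (nerve WIso)) (n := ⦋0⦌)).symm (ComposableArrows.mk₀ (false : WIso))

/-- An *isofibration* is a map (between quasi-categories) having the right lifting property
with respect to the inner horn inclusions and the endpoint inclusion `Δ[0] ⟶ N(I)`. -/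
def IsIsofibration {E B : SSet.{0}} (p : E ⟶ B) : Prop :=
  IsInnerFibration p ∧ HasLiftingProperty ptWIso p

/-- A *trivial fibration* is a map having the right lifting property with respect to
all boundary inclusions. -/
def IsTrivialFibration {E B : SSet.{0}} (p : E ⟶ B) : Prop :=
  ∀ n : ℕ, HasLiftingProperty (∂Δ[n].ι) p

/-! ## Terminal vertices -/

/-- The final vertex of `∂Δ[n+1]`. -/
def lastVtxBdry (n : ℕ) : (∂Δ[n+1] : SSet.{0}) _⦋0⦌ :=
  ⟨SSet.stdSimplex.const (n+1) (Fin.last (n+1)) (op ⦋0⦌), by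
    intro h
    obtain ⟨x, hx⟩ := h 0
    have := congrArg Fin.val hx
    simp [SSet.stdSimplex.asOrderHom, Fin.last] at this⟩

/-- A vertex `t` of a simplicial set `A` is *terminal in Joyal's sense* if every sphere
`∂Δ[n] ⟶ A` (`n ≥ 1`) whose final vertex is `t` can be filled to a simplex `Δ[n] ⟶ A`. -/
def IsTerminalVtx (A : SSet.{0}) (t : A _⦋0⦌) : Prop :=
  ∀ (n : ℕ) (s : (∂Δ[n+1] : SSet.{0}) ⟶ A), s.app (op ⦋0⦌) (lastVtxBdry n) = t →
    ∃ g : Δ[n+1] ⟶ A, ∂Δ[n+1].ι ≫ g = s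

end QCat

namespace QCat
open CategoryTheory Simplicial Opposite MonoidalCategory CartesianMonoidalCategory

/-! ## Yoneda lemmas -/

lemma yE_symm_naturality {B : SSet.{0}} {m m' : SimplexCategoryᵒᵖ} (φ : m ⟶ m') (x : B.obj m) :
    (SSet.yonedaEquiv (X := B) (n := m'.unop)).symm (B.map φ x) =
      SSet.stdSimplex.map φ.unop ≫ (SSet.yonedaEquiv (X := B) (n := m.unop)).symm x := by
  ext k g
  change B.map (g.down).op (B.map φ x) = B.map (g.down ≫ φ.unop).op x
  rw [← FunctorToTypes.map_comp_apply]
  rfl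

lemma yE_symm_comp {B B' : SSet.{0}} (r : B ⟶ B') {m : SimplexCategoryᵒᵖ} (x : B.obj m) :
    (SSet.yonedaEquiv (X := B') (n := m.unop)).symm (r.app m x) =
      (SSet.yonedaEquiv (X := B) (n := m.unop)).symm x ≫ r := by
  ext k g
  exact (NatTrans.naturality_apply r (g.down).op x).symm

end QCat

namespace QCat
open CategoryTheory Simplicial Opposite MonoidalCategory CartesianMonoidalCategory

/-! ## Comma simplicial sets -/

/-- The comma simplicial set `f↓g` of a cospan `f : B ⟶ A`, `g : C ⟶ A`: an `n`-simplex
is a triple `(c, b, α)` where `c` is an `n`-simplex of `C`, `b` is an `n`-simplex of `B`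
and `α : Δ[n] ⊗ Δ[1] ⟶ A` restricts at vertex `0` of `Δ[1]` to `f ∘ b` and at vertex `1`
to `g ∘ c`.  This is a concrete model of the pullback of
`A^{Δ[1]} → A × A` along `g × f : C × B → A × A`. -/
def comma {A B C : SSet.{0}} (f : B ⟶ A) (g : C ⟶ A) : SSet.{0} where
  obj m := {p : (C.obj m × B.obj m) × ((SSet.stdSimplex.obj m.unop ⊗ Δ[1] : SSet.{0}) ⟶ A) //
      pt 0 (SSet.stdSimplex.obj m.unop) ≫ p.2 = (SSet.yonedaEquiv (X := B) (n := m.unop)).symm p.1.2 ≫ f ∧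
      pt 1 (SSet.stdSimplex.obj m.unop) ≫ p.2 = (SSet.yonedaEquiv (X := C) (n := m.unop)).symm p.1.1 ≫ g}
  map φ := ↾fun p => ⟨((C.map φ p.1.1.1, B.map φ p.1.1.2),
      (SSet.stdSimplex.map φ.unop ▷ Δ[1]) ≫ p.1.2), by
        rw [← Category.assoc, ← pt_natural, Category.assoc, p.2.1,
          yE_symm_naturality, Category.assoc], by
        rw [← Category.assoc, ← pt_natural, Category.assoc, p.2.2,
          yE_symm_naturality, Category.assoc]⟩
  map_id m := by
    refine ConcreteCategory.hom_ext _ _ fun p => ?_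
    apply Subtype.ext
    refine Prod.ext (Prod.ext ?_ ?_) ?_ <;> simp <;> erw [CategoryTheory.Functor.map_id] <;> simp
  map_comp φ ψ := by
    refine ConcreteCategory.hom_ext _ _ fun p => ?_
    apply Subtype.ext
    refine Prod.ext (Prod.ext ?_ ?_) ?_ <;>
      simp [MonoidalCategory.comp_whiskerRight] <;> erw [CategoryTheory.Functor.map_comp] <;>
      simp [MonoidalCategory.comp_whiskerRight]

/-- The projection `f↓g ⟶ B` (evaluation at the domain). -/
def commaP₀ {A B C : SSet.{0}} (f : B ⟶ A) (g : C ⟶ A) : comma f g ⟶ B where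
  app m := ↾fun p => p.1.1.2
  naturality _ _ _ := rfl

/-- The projection `f↓g ⟶ C` (evaluation at the codomain). -/
def commaP₁ {A B C : SSet.{0}} (f : B ⟶ A) (g : C ⟶ A) : comma f g ⟶ C where
  app m := ↾fun p => p.1.1.1
  naturality _ _ _ := rfl

/-- The map between comma simplicial sets induced by a map of cospans. -/
def commaMap {A B C A' B' C' : SSet.{0}} {f : B ⟶ A} {g : C ⟶ A}
    {f' : B' ⟶ A'} {g' : C' ⟶ A'} (q : A ⟶ A') (r : B ⟶ B') (s : C ⟶ C')
    (hf : f ≫ q = r ≫ f') (hg : g ≫ q = s ≫ g') :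
    comma f g ⟶ comma f' g' where
  app m := ↾fun p => ⟨((s.app m p.1.1.1, r.app m p.1.1.2), p.1.2 ≫ q), by
      rw [← Category.assoc, p.2.1, Category.assoc, hf, yE_symm_comp, Category.assoc], by
      rw [← Category.assoc, p.2.2, Category.assoc, hg, yE_symm_comp, Category.assoc]⟩
  naturality φ ψ := by
    intro ρ
    refine ConcreteCategory.hom_ext _ _ fun p => ?_
    apply Subtype.ext
    refine Prod.ext (Prod.ext ?_ ?_) ?_
    · exact NatTrans.naturality_apply s _ _
    · exact NatTrans.naturality_apply r _ _
    · exact Category.assoc _ _ _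

end QCat

namespace QCat
open CategoryTheory Simplicial Opposite MonoidalCategory CartesianMonoidalCategory

/-! ## Adjunctions of quasi-categories -/

/-- An adjunction of quasi-categories `f ⊣ u` between quasi-categories `A` and `B`:
maps `f : B ⟶ A` and `u : A ⟶ B`, a unit `η` (a 1-simplex of `B^B` from the identity
to `u ∘ f`), a counit `ε` (a 1-simplex of `A^A` from `f ∘ u` to the identity), and
2-simplices `α` of `B^A` and `β` of `A^B` witnessing the two triangle identities. -/
structure QAdj (A B : SSet.{0}) (f : B ⟶ A) (u : A ⟶ B) : Type where
  /-- the unit, a `1`-simplex of `B^B` -/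
  η : (B ⊗ Δ[1] : SSet.{0}) ⟶ B
  /-- the counit, a `1`-simplex of `A^A` -/
  ε : (A ⊗ Δ[1] : SSet.{0}) ⟶ A
  η₀ : pt 0 B ≫ η = 𝟙 B
  η₁ : pt 1 B ≫ η = f ≫ u
  ε₀ : pt 0 A ≫ ε = u ≫ f
  ε₁ : pt 1 A ≫ ε = 𝟙 A
  /-- a `2`-simplex of `B^A` witnessing the triangle identity for `u` -/
  α : (A ⊗ Δ[2] : SSet.{0}) ⟶ B
  /-- a `2`-simplex of `A^B` witnessing the triangle identity for `f` -/
  β : (B ⊗ Δ[2] : SSet.{0}) ⟶ A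
  α₂ : (A ◁ SSet.stdSimplex.map (SimplexCategory.δ 2)) ≫ α = (u ▷ Δ[1]) ≫ η
  α₀ : (A ◁ SSet.stdSimplex.map (SimplexCategory.δ 0)) ≫ α = ε ≫ u
  α₁ : (A ◁ SSet.stdSimplex.map (SimplexCategory.δ 1)) ≫ α = fst A Δ[1] ≫ u
  β₂ : (B ◁ SSet.stdSimplex.map (SimplexCategory.δ 2)) ≫ β = η ≫ f
  β₀ : (B ◁ SSet.stdSimplex.map (SimplexCategory.δ 0)) ≫ β = (f ▷ Δ[1]) ≫ ε
  β₁ : (B ◁ SSet.stdSimplex.map (SimplexCategory.δ 1)) ≫ β = fst B Δ[1] ≫ f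

/-- The map `Δ[0] ⟶ A` corresponding to a vertex of `A`. -/
def vMap {A : SSet.{0}} (a : A _⦋0⦌) : Δ[0] ⟶ A :=
  (SSet.yonedaEquiv (X := A) (n := ⦋0⦌)).symm a

end QCat

namespace QCat
open CategoryTheory Simplicial Opposite MonoidalCategory CartesianMonoidalCategory

/-! ## Strict pullbacks of categories, and pullbacks of simplicial sets -/

/-- The strict pullback of two functors, formed in `Cat`. -/
structure CatPB {A : Type u₁} {B : Type u₂} {C : Type u₃}
    [Category.{v₁} A] [Category.{v₂} B] [Category.{v₃} C]
    (F : B ⥤ A) (G : C ⥤ A) : Type (max u₂ u₃) where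
  b : B
  c : C
  w : F.obj b = G.obj c

instance CatPB.category {A : Type u₁} {B : Type u₂} {C : Type u₃}
    [Category.{v₁} A] [Category.{v₂} B] [Category.{v₃} C]
    (F : B ⥤ A) (G : C ⥤ A) : Category.{max v₂ v₃} (CatPB F G) where
  Hom p q := {φ : (p.b ⟶ q.b) × (p.c ⟶ q.c) //
    F.map φ.1 = eqToHom p.w ≫ G.map φ.2 ≫ eqToHom q.w.symm}
  id p := ⟨(𝟙 p.b, 𝟙 p.c), by
    rw [CategoryTheory.Functor.map_id, CategoryTheory.Functor.map_id]
    simp⟩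
  comp φ ψ := ⟨(φ.1.1 ≫ ψ.1.1, φ.1.2 ≫ ψ.1.2), by
    rw [CategoryTheory.Functor.map_comp, CategoryTheory.Functor.map_comp, φ.2, ψ.2]
    simp⟩
  id_comp φ := by
    apply Subtype.ext
    apply Prod.ext <;> simp
  comp_id φ := by
    apply Subtype.ext
    apply Prod.ext <;> simp
  assoc φ ψ ρ := by
    apply Subtype.ext
    apply Prod.ext <;> simp

/-- The concrete pullback of a cospan of simplicial sets. -/
def sPullback {A B C : SSet.{0}} (f : B ⟶ A) (g : C ⟶ A) : SSet.{0} where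
  obj m := {p : B.obj m × C.obj m // f.app m p.1 = g.app m p.2}
  map φ := ↾fun p => ⟨(B.map φ p.1.1, C.map φ p.1.2), by
    rw [NatTrans.naturality_apply f, NatTrans.naturality_apply g, p.2]⟩
  map_id m := by refine ConcreteCategory.hom_ext _ _ fun p => ?_; apply Subtype.ext; simp
  map_comp φ ψ := by refine ConcreteCategory.hom_ext _ _ fun p => ?_; apply Subtype.ext; simp

end QCat

namespace QCat
open CategoryTheory Simplicial Opposite MonoidalCategory CartesianMonoidalCategory

/-! ## A universal property for `Ho` -/

/-- Construct a functor out of the homotopy category of a simplicial set from a prefunctor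
defined on vertices and edges which sends degenerate edges to identities and composites
witnessed by 2-simplices to composites. -/
def hoLift {X : SSet.{0}} {D : Type*} [Category D] (φ : Prefunctor (X _⦋0⦌) D)
    (hid : ∀ x : X _⦋0⦌, φ.map (degEdge x) = 𝟙 (φ.obj x))
    (hcomp : ∀ (σ : X _⦋2⦌) (a m b : X _⦋0⦌)
      (h2s : X.δ 1 (X.δ 2 σ) = a) (h2t : X.δ 0 (X.δ 2 σ) = m)
      (h0s : X.δ 1 (X.δ 0 σ) = m) (h0t : X.δ 0 (X.δ 0 σ) = b)
      (h1s : X.δ 1 (X.δ 1 σ) = a) (h1t : X.δ 0 (X.δ 1 σ) = b),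
      φ.map (⟨X.δ 2 σ, h2s, h2t⟩ : a ⟶ m) ≫ φ.map (⟨X.δ 0 σ, h0s, h0t⟩ : m ⟶ b) =
        φ.map (⟨X.δ 1 σ, h1s, h1t⟩ : a ⟶ b)) :
    Ho X ⥤ D :=
  CategoryTheory.Quotient.lift _ (Paths.lift φ) (by
    intro a b p q h
    induction h with
    | id x =>
      erw [Paths.lift_toPath, CategoryTheory.Functor.map_id]
      exact hid x
    | comp σ a m b h2s h2t h0s h0t h1s h1t =>
      erw [CategoryTheory.Functor.map_comp, Paths.lift_toPath, Paths.lift_toPath,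
        Paths.lift_toPath]
      exact hcomp σ a m b h2s h2t h0s h0t h1s h1t)

@[simp] lemma hoLift_obj_toHo {X : SSet.{0}} {D : Type*} [Category D]
    (φ : Prefunctor (X _⦋0⦌) D) (hid) (hcomp) (x : X _⦋0⦌) :
    (hoLift φ hid hcomp).obj (toHo x) = φ.obj x := rfl

lemma hoLift_map_homOfEdge {X : SSet.{0}} {D : Type*} [Category D]
    (φ : Prefunctor (X _⦋0⦌) D) (hid) (hcomp) (e : X _⦋1⦌) (x y : X _⦋0⦌)
    (hx : X.δ 1 e = x) (hy : X.δ 0 e = y) :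
    (hoLift φ hid hcomp).map (homOfEdge e x y hx hy) = φ.map ⟨e, hx, hy⟩ := by
  dsimp only [hoLift, homOfEdge]
  erw [CategoryTheory.Quotient.lift_map_functor_map, Paths.lift_toPath]
  rfl

lemma homOfEdge_eq {X : SSet.{0}} {e e' : X _⦋1⦌} (h : e = e') {x y x' y' : X _⦋0⦌}
    (hx : X.δ 1 e = x) (hy : X.δ 0 e = y) (hx' : X.δ 1 e' = x') (hy' : X.δ 0 e' = y')
    (hxx : toHo x = toHo x') (hyy : toHo y = toHo y') :
    homOfEdge e x y hx hy = eqToHom hxx ≫ homOfEdge e' x' y' hx' hy' ≫ eqToHom hyy.symm := by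
  subst h
  subst hx hy hx' hy'
  simp

end QCat

namespace QCat
open CategoryTheory Simplicial Opposite MonoidalCategory CartesianMonoidalCategory

/-! ## The comparison functor for pullbacks -/

/-- The canonical comparison prefunctor from the vertices and edges of `B ×_A C` to the
strict pullback of homotopy categories. -/
def cmpPBPre {A B C : SSet.{0}} (f : B ⟶ A) (g : C ⟶ A) :
    Prefunctor ((sPullback f g) _⦋0⦌) (CatPB (hoMap f) (hoMap g)) where
  obj p := ⟨toHo p.1.1, toHo p.1.2, congrArg toHo p.2⟩
  map {p q} E :=
    ⟨(homOfEdge E.1.1.1 p.1.1 q.1.1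
        (congrArg (fun z => z.1.1) E.2.1) (congrArg (fun z => z.1.1) E.2.2),
      homOfEdge E.1.1.2 p.1.2 q.1.2
        (congrArg (fun z => z.1.2) E.2.1) (congrArg (fun z => z.1.2) E.2.2)), by
      erw [hoMap_homOfEdge f _ _ _ (congrArg (fun z => z.1.1) E.2.1) (congrArg (fun z => z.1.1) E.2.2),
        hoMap_homOfEdge g _ _ _ (congrArg (fun z => z.1.2) E.2.1) (congrArg (fun z => z.1.2) E.2.2)]
      exact homOfEdge_eq E.1.2 _ _ _ _ (congrArg toHo p.2) (congrArg toHo q.2)⟩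

/-- The canonical comparison functor `h(B ×_A C) ⥤ hB ×_{hA} hC`. -/
def cmpPB {A B C : SSet.{0}} (f : B ⟶ A) (g : C ⟶ A) :
    Ho (sPullback f g) ⥤ CatPB (hoMap f) (hoMap g) :=
  hoLift (cmpPBPre f g)
    (fun p => by
      apply Subtype.ext
      apply Prod.ext
      · exact homOfEdge_deg p.1.1
      · exact homOfEdge_deg p.1.2)
    (fun σ a m b h2s h2t h0s h0t h1s h1t => by
      apply Subtype.ext
      apply Prod.ext
      · exact homOfEdge_comp σ.1.1 a.1.1 m.1.1 b.1.1
          (congrArg (fun z => z.1.1) h2s) (congrArg (fun z => z.1.1) h2t)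
          (congrArg (fun z => z.1.1) h0s) (congrArg (fun z => z.1.1) h0t)
          (congrArg (fun z => z.1.1) h1s) (congrArg (fun z => z.1.1) h1t)
      · exact homOfEdge_comp σ.1.2 a.1.2 m.1.2 b.1.2
          (congrArg (fun z => z.1.2) h2s) (congrArg (fun z => z.1.2) h2t)
          (congrArg (fun z => z.1.2) h0s) (congrArg (fun z => z.1.2) h0t)
          (congrArg (fun z => z.1.2) h1s) (congrArg (fun z => z.1.2) h1t))

end QCat

namespace QCat
open CategoryTheory Simplicial Opposite MonoidalCategory CartesianMonoidalCategory

/-! ## Evaluation of simplices of internal homs -/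

/-- The edge of `A` obtained by evaluating a `1`-simplex of `A^X` at a vertex of `X`. -/
def evalEdge {X A : SSet.{0}} (k : (X ⊗ Δ[1] : SSet.{0}) ⟶ A) (x : X _⦋0⦌) : A _⦋1⦌ :=
  k.app (op ⦋1⦌) (X.σ 0 x, SSet.yonedaEquiv (𝟙 (Δ[1] : SSet.{0})))

/-- The generic `m`-simplex of the standard simplex `Δ[m]`. -/
def genSimp (m : SimplexCategoryᵒᵖ) : (SSet.stdSimplex.obj m.unop).obj m :=
  (SSet.stdSimplex.objEquiv (n := m.unop) (m := m)).symm (𝟙 m.unop)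

lemma ptΔ_eq {n : ℕ} (x y : Δ[n] _⦋0⦌) (h : (SSet.stdSimplex.asOrderHom x) 0 = (SSet.stdSimplex.asOrderHom y) 0) :
    x = y := by
  apply (SSet.stdSimplex.objEquiv).injective
  apply SimplexCategory.Hom.ext
  apply OrderHom.ext
  funext i
  fin_cases i
  exact h

lemma map_const {n : ℕ} (k : Fin (n+1)) {m m' : SimplexCategoryᵒᵖ} (φ : m ⟶ m') :
    Δ[n].map φ (SSet.stdSimplex.const n k m) = SSet.stdSimplex.const n k m' := by
  apply (SSet.stdSimplex.objEquiv).injective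
  apply SimplexCategory.Hom.ext
  apply OrderHom.ext
  funext i
  rfl

/-- Evaluation of `A^{Δ[1]}` at a vertex of the exponent `Δ[1]`. -/
def evV {A : SSet.{0}} (i : Fin 2) : sHom Δ[1] A ⟶ A where
  app m := ↾fun k => k.app m (SSet.stdSimplex.const 1 i m, genSimp m)
  naturality {m m'} φ := by
    refine ConcreteCategory.hom_ext _ _ fun k => ?_
    change (k.app m' _ : A.obj m') = A.map φ (k.app m _)
    refine Eq.trans ?_ (NatTrans.naturality_apply k φ _)
    congr 1

end QCat

namespace QCat
open CategoryTheory Simplicial Opposite MonoidalCategory CartesianMonoidalCategory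

/-! ## Functors into arrow and comma categories from natural transformations -/

/-- The functor into the arrow category determined by a natural transformation. -/
def toArrowFunctor {C D : Type*} [Category C] [Category D] {F G : C ⥤ D} (ν : F ⟶ G) :
    C ⥤ Arrow D where
  obj c := Arrow.mk (ν.app c)
  map {c c'} φ := Arrow.homMk (u := F.map φ) (v := G.map φ) (ν.naturality φ)
  map_id c := by
    apply CommaMorphism.ext <;> simp
  map_comp φ ψ := by
    apply CommaMorphism.ext <;> simp

/-- The functor into a comma category determined by a natural transformation. -/
def toCommaFunctor {C D E T : Type*} [Category C] [Category D] [Category E] [Category T]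
    {L : D ⥤ T} {R : E ⥤ T} {P : C ⥤ D} {Q : C ⥤ E} (ν : P ⋙ L ⟶ Q ⋙ R) :
    C ⥤ Comma L R where
  obj c := ⟨P.obj c, Q.obj c, ν.app c⟩
  map {c c'} φ := ⟨P.map φ, Q.map φ, ν.naturality φ⟩
  map_id c := by
    apply CommaMorphism.ext <;> simp
  map_comp φ ψ := by
    apply CommaMorphism.ext <;> simp

end QCat

namespace QCat
open CategoryTheory Simplicial Opposite MonoidalCategory CartesianMonoidalCategory

/-! ## Pre- and post-composition on internal homs -/

/-- Postcomposition map on internal homs. -/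
def postW (X : SSet.{0}) {B A : SSet.{0}} (p : B ⟶ A) : sHom X B ⟶ sHom X A where
  app m := ↾fun g => g ≫ p
  naturality {m m'} φ := by
    refine ConcreteCategory.hom_ext _ _ fun g => ?_
    show ((X ◁ SSet.stdSimplex.map φ.unop) ≫ g) ≫ p =
      (X ◁ SSet.stdSimplex.map φ.unop) ≫ (g ≫ p)
    exact Category.assoc _ _ _

/-- Precomposition map on internal homs. -/
def preW {A B : SSet.{0}} (w : A ⟶ B) (C : SSet.{0}) : sHom B C ⟶ sHom A C where
  app m := ↾fun g => (w ▷ SSet.stdSimplex.obj m.unop) ≫ g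
  naturality {m m'} φ := by
    refine ConcreteCategory.hom_ext _ _ fun g => ?_
    show (w ▷ SSet.stdSimplex.obj m'.unop) ≫ ((B ◁ SSet.stdSimplex.map φ.unop) ≫ g) =
      (A ◁ SSet.stdSimplex.map φ.unop) ≫ ((w ▷ SSet.stdSimplex.obj m.unop) ≫ g)
    exact (Category.assoc _ _ _).symm.trans (((whisker_exchange _ _).symm =≫ g).trans (Category.assoc _ _ _))

end QCat

namespace QCat
open CategoryTheory Simplicial Opposite MonoidalCategory CartesianMonoidalCategory

/-! ## Distinguished vertices of comma quasi-categories -/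

/-- The vertex of the comma quasi-category `f↓a` determined by the vertex `u(a)` together
with the `1`-simplex `ε ∘ (a × Δ[1]) : f(u(a)) → a`, the component of the counit at `a`. -/
def counitVtx {A B : SSet.{0}} {f : B ⟶ A} {u : A ⟶ B} (adj : QAdj A B f u) (a : A _⦋0⦌) :
    (comma f (vMap a)) _⦋0⦌ :=
  ⟨((SSet.yonedaEquiv (𝟙 (Δ[0] : SSet.{0})), u.app (op ⦋0⦌) a), (vMap a ▷ Δ[1]) ≫ adj.ε), by
    constructor
    · rw [← Category.assoc, ← pt_natural, Category.assoc, adj.ε₀]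
      show _ = (SSet.yonedaEquiv (X := B) (n := ⦋0⦌)).symm (u.app (op ⦋0⦌) a) ≫ f
      rw [yE_symm_comp u a, Category.assoc]
      rfl
    · rw [← Category.assoc, ← pt_natural, Category.assoc, adj.ε₁, Category.comp_id]
      show vMap a = (SSet.yonedaEquiv (X := Δ[0]) (n := ⦋0⦌)).symm (SSet.yonedaEquiv (𝟙 (Δ[0] : SSet.{0}))) ≫ vMap a
      rw [Equiv.symm_apply_apply, Category.id_comp]⟩

/-- The vertex of the comma quasi-category `A↓a` determined by the vertex `a` together
with the degenerate `1`-simplex at `a`. -/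
def idVtx {A : SSet.{0}} (a : A _⦋0⦌) : (comma (𝟙 A) (vMap a)) _⦋0⦌ :=
  ⟨((SSet.yonedaEquiv (𝟙 (Δ[0] : SSet.{0})), a), fst Δ[0] Δ[1] ≫ vMap a), by
    constructor
    · rw [← Category.assoc]
      show (𝟙 _) ≫ vMap a = (SSet.yonedaEquiv (X := A) (n := ⦋0⦌)).symm a ≫ 𝟙 A
      rw [Category.id_comp, Category.comp_id]
      rfl
    · rw [← Category.assoc]
      show (𝟙 _) ≫ vMap a = (SSet.yonedaEquiv (X := Δ[0]) (n := ⦋0⦌)).symm (SSet.yonedaEquiv (𝟙 (Δ[0] : SSet.{0}))) ≫ vMap a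
      rw [Category.id_comp, Equiv.symm_apply_apply, Category.id_comp]⟩

/-! ## Fibred equivalences between `f↓A` and `B↓u` -/

/-- The data of an equivalence, fibred over `A × B`, between the comma quasi-categories
`f↓A` and `B↓u`. -/
structure CommaEquivFibred {A B : SSet.{0}} (f : B ⟶ A) (u : A ⟶ B) : Type where
  /-- a map `B↓u ⟶ f↓A` over `A × B` -/
  w : comma (𝟙 B) u ⟶ comma f (𝟙 A)
  /-- a map `f↓A ⟶ B↓u` over `A × B` -/
  w' : comma f (𝟙 A) ⟶ comma (𝟙 B) u
  hw₁ : w ≫ commaP₁ f (𝟙 A) = commaP₁ (𝟙 B) u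
  hw₀ : w ≫ commaP₀ f (𝟙 A) = commaP₀ (𝟙 B) u
  hw'₁ : w' ≫ commaP₁ (𝟙 B) u = commaP₁ f (𝟙 A)
  hw'₀ : w' ≫ commaP₀ (𝟙 B) u = commaP₀ f (𝟙 A)
  /-- a `1`-simplex of `(f↓A)^{f↓A}` whose two vertices are `w ∘ w'` and the identity -/
  H : (comma f (𝟙 A) ⊗ Δ[1] : SSet.{0}) ⟶ comma f (𝟙 A)
  hH : (pt 0 _ ≫ H = w' ≫ w ∧ pt 1 _ ≫ H = 𝟙 _) ∨
       (pt 0 _ ≫ H = 𝟙 _ ∧ pt 1 _ ≫ H = w' ≫ w)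
  hHiso : IsIsoEdge (sHom (comma f (𝟙 A)) (comma f (𝟙 A))) H
  hH₁ : H ≫ commaP₁ f (𝟙 A) = fst _ _ ≫ commaP₁ f (𝟙 A)
  hH₀ : H ≫ commaP₀ f (𝟙 A) = fst _ _ ≫ commaP₀ f (𝟙 A)
  /-- a `1`-simplex of `(B↓u)^{B↓u}` whose two vertices are `w' ∘ w` and the identity -/
  K : (comma (𝟙 B) u ⊗ Δ[1] : SSet.{0}) ⟶ comma (𝟙 B) u
  hK : (pt 0 _ ≫ K = w ≫ w' ∧ pt 1 _ ≫ K = 𝟙 _) ∨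
       (pt 0 _ ≫ K = 𝟙 _ ∧ pt 1 _ ≫ K = w ≫ w')
  hKiso : IsIsoEdge (sHom (comma (𝟙 B) u) (comma (𝟙 B) u)) K
  hK₁ : K ≫ commaP₁ (𝟙 B) u = fst _ _ ≫ commaP₁ (𝟙 B) u
  hK₀ : K ≫ commaP₀ (𝟙 B) u = fst _ _ ≫ commaP₀ (𝟙 B) u

end QCat

/-!
Lift the unit and counit along the full local functors. The left triangle composite of the lifts
is sent to an identity, so by conservativity it is invertible, and precomposing the counit with
(the whiskered) inverse makes the left triangle hold on the nose without changing the image of the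
counit. Given the left triangle, the right triangle composite is idempotent; it too is sent to an
identity, hence is invertible, and an invertible idempotent is an identity.
-/

namespace CategoryTheory.Bicategory

variable {B : Type*} [Bicategory B] {a b : B} {f : a ⟶ b} {g : b ⟶ a}
  {η : 𝟙 a ⟶ f ≫ g} {ϵ : g ≫ f ⟶ 𝟙 b}

theorem leftZigzag_whiskerLeft_comp (θ : f ⟶ f) :
    leftZigzag η (g ◁ θ ≫ ϵ) = 𝟙 a ◁ θ ≫ leftZigzag η ϵ := by
  calc leftZigzag η (g ◁ θ ≫ ϵ) = (η ▷ f ≫ (f ≫ g) ◁ θ) ⊗≫ f ◁ ϵ := by bicategory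
    _ = _ := by rw [← whisker_exchange]; bicategory

variable (η ϵ) in
noncomputable def correctedCounit [IsIso (leftZigzag η ϵ)] : g ≫ f ⟶ 𝟙 b :=
  g ◁ ((rightUnitor f).inv ≫ inv (leftZigzag η ϵ) ≫ (leftUnitor f).hom) ≫ ϵ

theorem leftZigzag_correctedCounit [IsIso (leftZigzag η ϵ)] :
    leftZigzag η (correctedCounit η ϵ) = (leftUnitor f).hom ≫ (rightUnitor f).inv := by
  rw [correctedCounit, leftZigzag_whiskerLeft_comp, id_whiskerLeft]
  simp

theorem right_triangle_of_left_triangle_of_isIso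
    (h : leftZigzag η ϵ = (leftUnitor f).hom ≫ (rightUnitor f).inv) [IsIso (rightZigzag η ϵ)] :
    rightZigzag η ϵ = (rightUnitor g).hom ≫ (leftUnitor g).inv := by
  rw [← cancel_epi (rightZigzag η ϵ ≫ (leftUnitor g).hom ≫ (rightUnitor g).inv)]
  calc _ = rightZigzag η ϵ ⊗≫ rightZigzag η ϵ := by bicategory
    _ = rightZigzag η ϵ := rightZigzag_idempotent_of_left_triangle _ _ h
    _ = _ := by simp

end CategoryTheory.Bicategory

namespace CategoryTheory.Pseudofunctor

open _root_.CategoryTheory.Bicategory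

variable {B C : Type*} [Bicategory B] [Bicategory C] (F : Pseudofunctor B C) {a b : B}
  {f : a ⟶ b} {g : b ⟶ a} {η : 𝟙 a ⟶ f ≫ g} {ϵ : g ≫ f ⟶ 𝟙 b}

theorem map₂_leftZigzag_of_map₂_eq (adj : F.map f ⊣ F.map g)
    (hη : F.map₂ η = (F.mapId a).hom ≫ adj.unit ≫ (F.mapComp f g).inv)
    (hϵ : F.map₂ ϵ = (F.mapComp g f).hom ≫ adj.counit ≫ (F.mapId b).inv) :
    F.map₂ (leftZigzag η ϵ) =
      F.map₂ ((Bicategory.leftUnitor f).hom ≫ (Bicategory.rightUnitor f).inv) := by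
  have h : adj.unit ▷ F.map f ≫ (Bicategory.associator _ _ _).hom ≫ F.map f ◁ adj.counit =
      (Bicategory.leftUnitor _).hom ≫ (Bicategory.rightUnitor _).inv := by
    rw [← adj.left_triangle]; bicategory
  simp [bicategoricalComp, hη, hϵ, F.map₂_iso_inv, reassoc_of% h]

theorem map₂_rightZigzag_of_map₂_eq (adj : F.map f ⊣ F.map g)
    (hη : F.map₂ η = (F.mapId a).hom ≫ adj.unit ≫ (F.mapComp f g).inv)
    (hϵ : F.map₂ ϵ = (F.mapComp g f).hom ≫ adj.counit ≫ (F.mapId b).inv) :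
    F.map₂ (rightZigzag η ϵ) =
      F.map₂ ((Bicategory.rightUnitor g).hom ≫ (Bicategory.leftUnitor g).inv) := by
  have h : F.map g ◁ adj.unit ≫ (Bicategory.associator _ _ _).inv ≫ adj.counit ▷ F.map g =
      (Bicategory.rightUnitor _).hom ≫ (Bicategory.leftUnitor _).inv := by
    rw [← adj.right_triangle]; bicategory
  simp [bicategoricalComp, hη, hϵ, F.map₂_iso_inv, reassoc_of% h]

theorem map₂_correctedCounit [IsIso (leftZigzag η ϵ)]
    (h : F.map₂ (leftZigzag η ϵ) =
      F.map₂ ((Bicategory.leftUnitor f).hom ≫ (Bicategory.rightUnitor f).inv)) :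
    F.map₂ (correctedCounit η ϵ) = F.map₂ ϵ := by
  have hθ : F.map₂ ((Bicategory.rightUnitor f).inv ≫ inv (leftZigzag η ϵ) ≫
      (Bicategory.leftUnitor f).hom) = 𝟙 _ := by
    simp [F.map₂_inv, h]
  rw [correctedCounit, F.map₂_comp, F.map₂_whisker_left, hθ]
  simp

end CategoryTheory.Pseudofunctor

namespace QCat
open CategoryTheory Bicategory

universe w₁ w₂ v₁' v₂' u₁' u₂'

/-- A locally smothering pseudofunctor lifts adjunctions. -/
theorem statement11 {B : Type u₁'} {C : Type u₂'}
    [Bicategory.{w₁, v₁'} B] [Bicategory.{w₂, v₂'} C]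
    (F : Pseudofunctor B C)
    (hsurj : ∀ (x y : B) (g : F.obj x ⟶ F.obj y), ∃ f : x ⟶ y, F.map f = g)
    (hfull : ∀ (x y : B) (f g : x ⟶ y) (η' : F.map f ⟶ F.map g),
      ∃ η : f ⟶ g, F.map₂ η = η')
    (hcons : ∀ (x y : B) (f g : x ⟶ y) (η : f ⟶ g), IsIso (F.map₂ η) → IsIso η)
    {a b : B} (f' : F.obj b ⟶ F.obj a) (u' : F.obj a ⟶ F.obj b)
    (adj' : Bicategory.Adjunction f' u') :
    ∃ (f : b ⟶ a) (u : a ⟶ b) (_ : F.map f = f') (_ : F.map u = u'),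
      Nonempty (Bicategory.Adjunction f u) := by
  obtain ⟨f, rfl⟩ := hsurj b a f'
  obtain ⟨u, rfl⟩ := hsurj a b u'
  obtain ⟨η, hη⟩ := hfull _ _ _ _ ((F.mapId b).hom ≫ adj'.unit ≫ (F.mapComp f u).inv)
  obtain ⟨ϵ, hϵ⟩ := hfull _ _ _ _ ((F.mapComp u f).hom ≫ adj'.counit ≫ (F.mapId a).inv)
  have hleft := F.map₂_leftZigzag_of_map₂_eq adj' hη hϵ
  have : IsIso (leftZigzag η ϵ) := hcons _ _ _ _ _ (by rw [hleft]; infer_instance)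
  have hright := F.map₂_rightZigzag_of_map₂_eq adj' hη ((F.map₂_correctedCounit hleft).trans hϵ)
  have : IsIso (rightZigzag η (correctedCounit η ϵ)) :=
    hcons _ _ _ _ _ (by rw [hright]; infer_instance)
  exact ⟨f, u, rfl, rfl, ⟨η, correctedCounit η ϵ, leftZigzag_correctedCounit,
    right_triangle_of_left_triangle_of_isIso leftZigzag_correctedCounit⟩⟩
end QCat
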